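/- arXiv:1804.07413 — 2 statements merged into one kernel-verified Lean document; each statement's English description precedes it below -/
import Mathlib

section
/- For every s, t ∈ [0,1] with s ≤ t and every R > (t−s)/2 there exist analytic functions h and q on 𝔻 with h'(z) ≠ 0 for all z ∈ 𝔻 such that sup_{z∈𝔻} (1−|z|²)²|Sh(z)| = 2s, q(z)² = R·z² for all z ∈ 𝔻, and the harmonic mapping f = h + conj(g) with dilatation ω = q² satisfies Φ_f(0) = 2s + 4R > 2t. -/
open Complex Metric ComplexConjugate

/-- The Schwarzian derivative `SF = (F''/F')' - (1/2)(F''/F')^2`. -/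
noncomputable def schwarzian (F : ℂ → ℂ) (z : ℂ) : ℂ :=
  deriv (fun w => deriv (deriv F) w / deriv F w) z
    - (1 / 2) * (deriv (deriv F) z / deriv F z) ^ 2

/-- The Schwarzian derivative of the harmonic mapping `f = h + conj g` with
dilatation `ω = g'/h' = q^2`:
`Sf = Sh + (2 conj q/(1+|q|²))·(q'' - q'·h''/h') - 4(q' conj q/(1+|q|²))²`. -/
noncomputable def Sharm (h q : ℂ → ℂ) (z : ℂ) : ℂ :=
  schwarzian h z
    + (2 * conj (q z) / (1 + ((‖q z‖ : ℂ)) ^ 2)) *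
        (deriv (deriv q) z - deriv q z * (deriv (deriv h) z / deriv h z))
    - 4 * (deriv q z * conj (q z) / (1 + ((‖q z‖ : ℂ)) ^ 2)) ^ 2

/-- `Φ_f(z) = |Sf(z)| + 4|q'(z)|²/(1+|q(z)|²)²` for `f = h + conj g`, `ω = q²`. -/
noncomputable def PhiHarm (h q : ℂ → ℂ) (z : ℂ) : ℝ :=
  ‖Sharm h q z‖
    + 4 * ‖deriv q z‖ ^ 2 / (1 + ‖q z‖ ^ 2) ^ 2

/-! Take `h' = exp (a z)` with `a² = -4s`: then `h''/h' = a` is constant, so `Sh ≡ -a²/2 = 2s`,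
and the weighted supremum of `|Sh|` is `2s`, attained at `z = 0`. With `q = c z`, `c² = R`, and
`g` the primitive of `q² h'` vanishing at `0`, the zero of `q` at `0` kills both correction terms of
`Sf(0)`, so `Φ_f(0) = |Sh(0)| + 4|c|² = 2s + 4R`, which exceeds `2t` because `R > (t - s)/2`. -/

theorem schwarzian_of_hasDerivAt_exp {F : ℂ → ℂ} (a : ℂ)
    (hF : ∀ z, HasDerivAt F (exp (a * z)) z) (z : ℂ) :
    schwarzian F z = -(a ^ 2 / 2) := by
  have hF' : deriv F = fun w => exp (a * w) := funext fun w => (hF w).deriv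
  have hF'' (w : ℂ) : deriv (deriv F) w = a * exp (a * w) := by
    rw [hF', (((hasDerivAt_id' w).const_mul a).cexp).deriv]
    ring
  have hpre (w : ℂ) : deriv (deriv F) w / deriv F w = a := by
    rw [hF'' w, (hF w).deriv, mul_div_cancel_right₀ _ (exp_ne_zero _)]
  simp only [schwarzian, hpre, deriv_const']
  ring

theorem sSup_image_ball_one_sub_norm_sq_sq_mul {c : ℝ} (hc : 0 ≤ c) :
    sSup ((fun z : ℂ => (1 - ‖z‖ ^ 2) ^ 2 * c) '' ball 0 1) = c := by
  refine IsGreatest.csSup_eq ⟨⟨0, mem_ball_self one_pos, by simp⟩, ?_⟩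
  rintro _ ⟨z, hz, rfl⟩
  have hz1 : ‖z‖ < 1 := mem_ball_zero_iff.mp hz
  have hweight : (1 - ‖z‖ ^ 2) ^ 2 ≤ 1 :=
    pow_le_one₀ (by nlinarith [norm_nonneg z]) (by linarith [sq_nonneg ‖z‖])
  exact mul_le_of_le_one_left hc hweight

theorem PhiHarm_of_eq_zero {h q : ℂ → ℂ} {z : ℂ} (hq : q z = 0) :
    PhiHarm h q z = ‖schwarzian h z‖ + 4 * ‖deriv q z‖ ^ 2 := by
  simp [PhiHarm, Sharm, hq]

theorem stmt_2_general (s t R : ℝ) (hs : s ∈ Set.Icc (0 : ℝ) 1)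
    (hst : s ≤ t) (hR : (t - s) / 2 < R) :
    ∃ h q g : ℂ → ℂ,
      AnalyticOnNhd ℂ h (ball 0 1) ∧ AnalyticOnNhd ℂ q (ball 0 1) ∧
      AnalyticOnNhd ℂ g (ball 0 1) ∧
      (∀ z ∈ ball (0 : ℂ) 1, deriv h z ≠ 0) ∧
      sSup ((fun z => (1 - ‖z‖ ^ 2) ^ 2 * ‖schwarzian h z‖) ''
        ball (0 : ℂ) 1) = 2 * s ∧
      (∀ z ∈ ball (0 : ℂ) 1, (q z) ^ 2 = (R : ℂ) * z ^ 2) ∧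
      g 0 = 0 ∧
      (∀ z ∈ ball (0 : ℂ) 1, deriv g z = (q z) ^ 2 * deriv h z) ∧
      PhiHarm h q 0 = 2 * s + 4 * R ∧ 2 * t < 2 * s + 4 * R := by
  obtain ⟨a, ha⟩ := IsAlgClosed.exists_pow_nat_eq (-(4 * s) : ℂ) two_pos
  obtain ⟨c, hc⟩ := IsAlgClosed.exists_pow_nat_eq (R : ℂ) two_pos
  have hcn : ‖c‖ ^ 2 = R := by
    rw [← norm_pow, hc, norm_real, Real.norm_of_nonneg (by linarith)]
  obtain ⟨h, hh⟩ := (show Differentiable ℂ fun z => exp (a * z) by fun_prop).isExactOn_univ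
  obtain ⟨g, hg0, hg⟩ := (show Differentiable ℂ fun z => (R : ℂ) * z ^ 2 * exp (a * z) by
    fun_prop).isExactOn_univ.with_val_at 0 0
  replace hh (z : ℂ) := hh z trivial
  replace hg (z : ℂ) := hg z trivial
  have hSh (z : ℂ) : ‖schwarzian h z‖ = 2 * s := by
    rw [schwarzian_of_hasDerivAt_exp a hh, ha,
      show -(-(4 * (s : ℂ)) / 2) = ((2 * s : ℝ) : ℂ) by push_cast; ring, norm_real,
      Real.norm_of_nonneg (by linarith [hs.1])]
  have hq' (z : ℂ) : deriv (fun w => c * w) z = c := by simp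
  refine ⟨h, fun z => c * z, g,
    fun z _ => Differentiable.analyticAt (fun w => (hh w).differentiableAt) z,
    fun z _ => (by fun_prop : Differentiable ℂ _).analyticAt z,
    fun z _ => Differentiable.analyticAt (fun w => (hg w).differentiableAt) z,
    fun z _ => (hh z).deriv ▸ exp_ne_zero _, ?_, fun z _ => by rw [mul_pow, hc], hg0,
    fun z _ => by rw [(hg z).deriv, (hh z).deriv, mul_pow, hc], ?_, by linarith⟩
  · simp only [hSh]
    exact sSup_image_ball_one_sub_norm_sq_sq_mul (by linarith [hs.1])
  · rw [PhiHarm_of_eq_zero (mul_zero c), hSh, hq', hcn]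

theorem stmt_2 (s t R : ℝ) (hs : s ∈ Set.Icc (0 : ℝ) 1) (ht : t ∈ Set.Icc (0 : ℝ) 1)
    (hst : s ≤ t) (hR : (t - s) / 2 < R) :
    ∃ h q g : ℂ → ℂ,
      AnalyticOnNhd ℂ h (ball 0 1) ∧ AnalyticOnNhd ℂ q (ball 0 1) ∧
      AnalyticOnNhd ℂ g (ball 0 1) ∧
      (∀ z ∈ ball (0 : ℂ) 1, deriv h z ≠ 0) ∧
      sSup ((fun z => (1 - ‖z‖ ^ 2) ^ 2 * ‖schwarzian h z‖) ''
        ball (0 : ℂ) 1) = 2 * s ∧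
      (∀ z ∈ ball (0 : ℂ) 1, (q z) ^ 2 = (R : ℂ) * z ^ 2) ∧
      g 0 = 0 ∧
      (∀ z ∈ ball (0 : ℂ) 1, deriv g z = (q z) ^ 2 * deriv h z) ∧
      PhiHarm h q 0 = 2 * s + 4 * R ∧ 2 * t < 2 * s + 4 * R :=
  stmt_2_general s t R hs hst hR
end

section
/- Let Ω ⊊ ℂ be a simply connected domain, φ : 𝔻 → Ω an injective analytic map of 𝔻 onto Ω, and λ ∈ 𝕋 a direction with M(λ) < ∞. Let ε be a real number with 0 ≤ ε < 1/(2·M(λ) + 1), and let h, g be analytic functions on 𝔻 satisfying h − λ²g = φ and |g'(z)| ≤ ε·|h'(z)| for all z ∈ 𝔻. Then the harmonic mapping f = h + conj(g) is injective on 𝔻. -/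
/-!
Suppose `f z₁ = f z₂` and put `b = g z₂ - g z₁`. Then `φ z₁ - φ z₂ = conj b + λ² b`: this chord of
`Ω` points in the direction `λ` and has length at most `2 |b|`. Since `φ' = h' - λ² g'` and
`|g'| ≤ ε |h'|`, the function `ψ = g ∘ φ⁻¹` satisfies `|ψ'| ≤ ε / (1 - ε)` on `Ω`, so integrating
along curves in `Ω` gives `|b| ≤ ε / (1 - ε) · ℓ(φ z₁, φ z₂) ≤ 2 M(λ) ε / (1 - ε) · |b|`.
The choice of `ε` makes the constant `< 1`, so `b = 0`, `φ z₁ = φ z₂` and `z₁ = z₂`.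
Inverting `φ` locally needs `φ' ≠ 0`: at a critical point of order `n ≥ 2`, `φ` is `w ↦ wⁿ` in a
local coordinate `w`, hence not injective.
-/

open Complex Metric ComplexConjugate ENNReal

/-- `ℓ(z,w)`: the infimum of the lengths of curves joining `z` to `w` inside `Ω`
(`⊤` if no such curve exists). Lengths are measured by the total variation
of a parametrization over `[0,1]`. -/
noncomputable def pathLengthInf (Ω : Set ℂ) (z w : ℂ) : ℝ≥0∞ :=
  ⨅ (γ : ℝ → ℂ) (_ : ContinuousOn γ (Set.Icc 0 1)) (_ : γ 0 = z) (_ : γ 1 = w)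
    (_ : Set.MapsTo γ (Set.Icc 0 1) Ω), eVariationOn γ (Set.Icc 0 1)

/-- The directional chord-arc constant
`M(λ) = sup { ℓ(z,w)/|z-w| : z, w ∈ Ω, z ≠ w, conj(λ)(z-w) ∈ ℝ }`. -/
noncomputable def Mdir (Ω : Set ℂ) (lam : ℂ) : ℝ≥0∞ :=
  ⨆ (z : ℂ) (w : ℂ) (_ : z ∈ Ω) (_ : w ∈ Ω) (_ : z ≠ w)
    (_ : (conj lam * (z - w)).im = 0),
    pathLengthInf Ω z w / ENNReal.ofReal (‖z - w‖)

open Filter Topology Set Function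

theorem norm_le_div_one_sub_mul_norm_sub {E : Type*} [SeminormedAddCommGroup E] {a c d : E}
    {ε : ℝ} (hε₀ : 0 ≤ ε) (hε₁ : ε < 1) (hd : ‖d‖ ≤ ‖c‖) (hc : ‖c‖ ≤ ε * ‖a‖) :
    ‖c‖ ≤ ε / (1 - ε) * ‖a - d‖ := by
  have ha : ‖a‖ ≤ ‖a - d‖ + ‖d‖ := norm_le_norm_sub_add a d
  rw [div_mul_eq_mul_div, le_div_iff₀ (by linarith)]
  nlinarith

theorem norm_deriv_le_of_shear {U : Set ℂ} (hU : IsOpen U) {φ h g : ℂ → ℂ} {lam : ℂ} {ε : ℝ}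
    (hh : DifferentiableOn ℂ h U) (hg : DifferentiableOn ℂ g U)
    (hshear : ∀ z ∈ U, h z - lam ^ 2 * g z = φ z) (hlam : ‖lam‖ = 1) (hε₀ : 0 ≤ ε)
    (hε₁ : ε < 1) (hdil : ∀ z ∈ U, ‖deriv g z‖ ≤ ε * ‖deriv h z‖) {z : ℂ} (hz : z ∈ U) :
    ‖deriv g z‖ ≤ ε / (1 - ε) * ‖deriv φ z‖ := by
  have hderiv : deriv φ z = deriv h z - lam ^ 2 * deriv g z := by
    rw [← (eventuallyEq_of_mem (hU.mem_nhds hz) hshear).deriv_eq]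
    exact (((hh z hz).differentiableAt (hU.mem_nhds hz)).hasDerivAt.sub
      (((hg z hz).differentiableAt (hU.mem_nhds hz)).hasDerivAt.const_mul _)).deriv
  rw [hderiv]
  exact norm_le_div_one_sub_mul_norm_sub hε₀ hε₁ (by simp [hlam]) (hdil z hz)

theorem Complex.im_conj_mul_conj_add_sq_mul {lam : ℂ} (hlam : ‖lam‖ = 1) (b : ℂ) :
    (conj lam * (conj b + lam ^ 2 * b)).im = 0 := by
  have hunit : conj lam * lam = 1 := by
    rw [conj_mul', hlam]; norm_num
  have h : conj lam * (conj b + lam ^ 2 * b) = conj (lam * b) + lam * b := by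
    rw [map_mul]; linear_combination (lam * b) * hunit
  simp only [h, add_im, conj_im]; ring

theorem Complex.norm_conj_add_sq_mul_le {lam : ℂ} (hlam : ‖lam‖ = 1) (b : ℂ) :
    ‖conj b + lam ^ 2 * b‖ ≤ 2 * ‖b‖ := by
  calc ‖conj b + lam ^ 2 * b‖ ≤ ‖conj b‖ + ‖lam ^ 2 * b‖ := norm_add_le _ _
    _ = 2 * ‖b‖ := by rw [norm_mul, norm_pow, hlam, RCLike.norm_conj]; ring

theorem not_injOn_pow_of_map_nhds_eq_zero {w : ℂ → ℂ} {z₀ : ℂ} {n : ℕ} (hn : 2 ≤ n)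
    (hw : map w (𝓝 z₀) = 𝓝 0) {s : Set ℂ} (hs : s ∈ 𝓝 z₀) :
    ¬ InjOn (fun z => w z ^ n) s := by
  intro hinj
  have hζ := Complex.isPrimitiveRoot_exp n (by omega)
  set ζ := exp (2 * Real.pi * I / n)
  have hV : w '' s ∈ 𝓝 0 := hw ▸ image_mem_map hs
  have hζV : (ζ * ·) ⁻¹' (w '' s) ∈ 𝓝 0 :=
    (continuous_const_mul ζ).tendsto' 0 0 (mul_zero ζ) hV
  have h : ∀ᶠ u in 𝓝[≠] (0 : ℂ), (u ∈ w '' s ∧ ζ * u ∈ w '' s) ∧ u ≠ 0 :=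
    Eventually.and (mem_nhdsWithin_of_mem_nhds (inter_mem hV hζV)) self_mem_nhdsWithin
  obtain ⟨_, ⟨⟨a, ha, rfl⟩, b, hb, hba⟩, hu⟩ := h.exists
  have hab : a = b := hinj ha hb (by simp only [hba, mul_pow, hζ.pow_eq_one, one_mul])
  subst hab
  exact hζ.ne_one (by omega) (mul_eq_right₀ hu |>.mp hba.symm)

theorem AnalyticAt.exists_analyticAt_pow_eq {q : ℂ → ℂ} {z₀ : ℂ} (hq : AnalyticAt ℂ q z₀)
    (hq₀ : q z₀ ≠ 0) {n : ℕ} (hn : n ≠ 0) :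
    ∃ ρ : ℂ → ℂ, AnalyticAt ℂ ρ z₀ ∧ ρ z₀ ≠ 0 ∧ ∀ z, ρ z ^ n = q z := by
  obtain ⟨c, hc⟩ := IsAlgClosed.exists_pow_nat_eq (q z₀) (Nat.pos_of_ne_zero hn)
  refine ⟨fun z => c * (q z / q z₀) ^ (n⁻¹ : ℂ), ?_, ?_, fun z => ?_⟩
  · refine analyticAt_const.mul ((hq.div analyticAt_const hq₀).cpow analyticAt_const ?_)
    simp [hq₀]
  · have hc₀ : c ≠ 0 := by rintro rfl; exact hq₀ (by rw [← hc, zero_pow hn])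
    simp [hq₀, hc₀]
  · rw [mul_pow, cpow_nat_inv_pow _ hn, hc, mul_div_cancel₀ _ hq₀]

theorem AnalyticAt.deriv_ne_zero_of_injOn {f : ℂ → ℂ} {z₀ : ℂ} {s : Set ℂ}
    (hf : AnalyticAt ℂ f z₀) (hs : s ∈ 𝓝 z₀) (hinj : InjOn f s) : deriv f z₀ ≠ 0 := by
  intro hf'
  set F := fun z => f z - f z₀
  have hF : AnalyticAt ℂ F z₀ := hf.sub analyticAt_const
  have hF₂ : ((2 : ℕ) : ℕ∞) ≤ analyticOrderAt F z₀ := by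
    rw [natCast_le_analyticOrderAt_iff_iteratedDeriv_eq_zero hF]
    intro i hi
    interval_cases i <;> simp [F, hf']
  have hFtop : analyticOrderAt F z₀ ≠ ⊤ := by
    rw [Ne, analyticOrderAt_eq_top]
    intro hF₀
    have h : ∀ᶠ z in 𝓝[≠] z₀, (z ∈ s ∧ F z = 0) ∧ z ≠ z₀ :=
      Eventually.and (nhdsWithin_le_nhds (Eventually.and hs hF₀)) self_mem_nhdsWithin
    obtain ⟨z, ⟨hzs, hz⟩, hne⟩ := h.exists
    exact hne (hinj hzs (mem_of_mem_nhds hs) (sub_eq_zero.mp hz))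
  obtain ⟨n, hn⟩ := ENat.ne_top_iff_exists.mp hFtop
  obtain ⟨q, hq, hq₀, hFq⟩ := (analyticOrderAt_eq_natCast hF).mp hn.symm
  have hn₂ : 2 ≤ n := by rw [← hn] at hF₂; exact_mod_cast hF₂
  obtain ⟨ρ, hρ, hρ₀, hρq⟩ := hq.exists_analyticAt_pow_eq hq₀ (n := n) (by omega)
  set w := fun z => (z - z₀) * ρ z
  have hw : HasStrictDerivAt w (ρ z₀) z₀ := by
    have hsub : HasStrictDerivAt (· - z₀) 1 z₀ := (hasStrictDerivAt_id z₀).sub_const z₀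
    simpa using hsub.fun_mul hρ.hasStrictDerivAt
  have hFw : ∀ᶠ z in 𝓝 z₀, f z = f z₀ + w z ^ n := by
    filter_upwards [hFq] with z hz
    rw [← sub_eq_iff_eq_add']
    simp only [F, smul_eq_mul] at hz
    rw [hz, mul_pow, hρq]
  obtain ⟨t, ht, hft⟩ := hFw.exists_mem
  refine not_injOn_pow_of_map_nhds_eq_zero hn₂ (by simpa [w] using hw.map_nhds_eq hρ₀)
    (inter_mem hs ht) fun a ha b hb hab => hinj ha.1 hb.1 ?_
  rw [hft a ha.2, hft b hb.2]
  exact congrArg (f z₀ + ·) hab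

theorem exists_lipschitzOnWith_ball_comp_invFunOn {φ g : ℂ → ℂ} {U : Set ℂ} {k : NNReal}
    (hU : IsOpen U) (hφ : AnalyticOnNhd ℂ φ U) (hinj : InjOn φ U) (hg : DifferentiableOn ℂ g U)
    (hk : ∀ z ∈ U, ‖deriv g z‖ ≤ k * ‖deriv φ z‖) {y : ℂ} (hy : y ∈ φ '' U) :
    ∃ r > 0, LipschitzOnWith k (g ∘ invFunOn φ U) (ball y r) := by
  have hφ' : ∀ z ∈ U, deriv φ z ≠ 0 := fun z hz =>
    (hφ z hz).deriv_ne_zero_of_injOn (hU.mem_nhds hz) hinj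
  have hopen : IsOpen (φ '' U) := isOpen_iff_mem_nhds.mpr <| by
    rintro _ ⟨z, hz, rfl⟩
    exact (hφ z hz).hasStrictDerivAt.map_nhds_eq (hφ' z hz) ▸ image_mem_map (hU.mem_nhds hz)
  have hderiv : ∀ z ∈ U, HasDerivAt (g ∘ invFunOn φ U) (deriv g z / deriv φ z) (φ z) := by
    intro z hz
    have hinv : HasStrictDerivAt (invFunOn φ U) (deriv φ z)⁻¹ (φ z) :=
      (hφ z hz).hasStrictDerivAt.to_local_left_inverse (hφ' z hz)
        (eventually_of_mem (hU.mem_nhds hz) fun x hx => hinj.leftInvOn_invFunOn hx)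
    have hgz : HasDerivAt g (deriv g z) (invFunOn φ U (φ z)) := by
      rw [hinj.leftInvOn_invFunOn hz]
      exact ((hg z hz).differentiableAt (hU.mem_nhds hz)).hasDerivAt
    exact hgz.comp (φ z) hinv.hasDerivAt
  obtain ⟨r, hr, hball⟩ := Metric.isOpen_iff.mp hopen y hy
  refine ⟨r, hr, (convex_ball y r).lipschitzOnWith_of_nnnorm_hasDerivWithin_le
    (f' := fun w => deriv g (invFunOn φ U w) / deriv φ (invFunOn φ U w)) ?_ ?_⟩
  all_goals
    intro w hw
    obtain ⟨z, hz, rfl⟩ := hball hw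
    simp only [hinj.leftInvOn_invFunOn hz]
  · exact (hderiv z hz).hasDerivWithinAt
  · rw [← NNReal.coe_le_coe, coe_nnnorm, norm_div, div_le_iff₀ (norm_pos_iff.mpr (hφ' z hz))]
    exact hk z hz

theorem exists_partition_Icc {a b η : ℝ} (hab : a ≤ b) (hη : 0 < η) :
    ∃ (N : ℕ) (u : ℕ → ℝ), Monotone u ∧ u 0 = a ∧ u N = b ∧ (∀ i ≤ N, u i ∈ Icc a b) ∧
      ∀ i, dist (u (i + 1)) (u i) < η := by
  obtain ⟨N, hN⟩ := exists_nat_gt ((b - a) / η)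
  have hN₀ : (0 : ℝ) < N := lt_of_le_of_lt (div_nonneg (sub_nonneg.mpr hab) hη.le) hN
  have hstep : (b - a) / N < η := (div_lt_iff₀ hN₀).mpr (by rwa [div_lt_iff₀ hη, mul_comm] at hN)
  have hstep₀ : 0 ≤ (b - a) / N := div_nonneg (sub_nonneg.mpr hab) hN₀.le
  refine ⟨N, fun i => a + i * ((b - a) / N), fun i j hij => ?_, by simp, ?_, fun i hi => ?_,
    fun i => ?_⟩
  · dsimp only
    gcongr
  · field_simp
    ring
  · have hi' : (i : ℝ) ≤ N := by exact_mod_cast hi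
    refine ⟨le_add_of_nonneg_right (by positivity), ?_⟩
    calc a + i * ((b - a) / N) ≤ a + N * ((b - a) / N) := by gcongr
      _ = b := by field_simp; ring
  · rw [Real.dist_eq]
    dsimp only
    rwa [Nat.cast_add_one, add_one_mul, add_sub_add_left_eq_sub, add_sub_cancel_left,
      abs_of_nonneg hstep₀]

theorem edist_comp_le_mul_eVariationOn {X Y : Type*} [PseudoMetricSpace X]
    [PseudoEMetricSpace Y] {ψ : X → Y} {K : NNReal} {γ : ℝ → X} {a b : ℝ} (hab : a ≤ b)
    (hγ : ContinuousOn γ (Icc a b))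
    (hψ : ∀ t ∈ Icc a b, ∃ r > 0, LipschitzOnWith K ψ (ball (γ t) r)) :
    edist (ψ (γ a)) (ψ (γ b)) ≤ K * eVariationOn γ (Icc a b) := by
  choose! r hr hlip using hψ
  obtain ⟨δ, hδ, hleb⟩ := lebesgue_number_lemma_of_metric (isCompact_Icc.image_of_continuousOn hγ)
    (c := fun t : Icc a b => ball (γ t) (r t)) (fun _ => isOpen_ball)
    (fun _ ⟨t, ht, hγt⟩ => mem_iUnion.mpr ⟨⟨t, ht⟩, hγt ▸ mem_ball_self (hr t ht)⟩)
  obtain ⟨η, hη, hγη⟩ :=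
    Metric.uniformContinuousOn_iff.mp (isCompact_Icc.uniformContinuousOn_of_continuous hγ) δ hδ
  obtain ⟨N, u, hu, hu₀, huN, huI, hustep⟩ := exists_partition_Icc hab hη
  have hlocal : ∀ i < N, edist (ψ (γ (u i))) (ψ (γ (u (i + 1)))) ≤
      K * edist (γ (u (i + 1))) (γ (u i)) := by
    intro i hi
    obtain ⟨⟨t, ht⟩, hsub⟩ := hleb _ (mem_image_of_mem γ (huI i hi.le))
    rw [edist_comm (γ _)]
    refine hlip t ht (hsub (mem_ball_self hδ)) (hsub ?_)
    rw [mem_ball, dist_comm]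
    exact hγη _ (huI i hi.le) _ (huI (i + 1) hi) (by rw [dist_comm]; exact hustep i)
  calc edist (ψ (γ a)) (ψ (γ b)) = edist (ψ (γ (u 0))) (ψ (γ (u N))) := by rw [hu₀, huN]
    _ ≤ ∑ i ∈ Finset.range N, edist (ψ (γ (u i))) (ψ (γ (u (i + 1)))) :=
      edist_le_range_sum_edist (fun i => ψ (γ (u i))) N
    _ ≤ ∑ i ∈ Finset.range N, K * edist (γ (u (i + 1))) (γ (u i)) :=
      Finset.sum_le_sum fun i hi => hlocal i (Finset.mem_range.mp hi)
    _ = K * ∑ i ∈ Finset.range N, edist (γ (u (i + 1))) (γ (u i)) := by rw [Finset.mul_sum]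
    _ ≤ K * eVariationOn γ (Icc a b) := by
      gcongr
      exact eVariationOn.sum_le_of_monotoneOn_Iic (hu.monotoneOn _) huI

-- The quotient form keeps this true for `K = 0`, where it says `ℓ = ⊤` unless `ψ z = ψ w`.
theorem edist_div_le_pathLengthInf {Ω : Set ℂ} {ψ : ℂ → ℂ} {K : NNReal}
    (hψ : ∀ y ∈ Ω, ∃ r > 0, LipschitzOnWith K ψ (ball y r)) (z w : ℂ) :
    edist (ψ z) (ψ w) / K ≤ pathLengthInf Ω z w := by
  refine le_iInf fun γ => le_iInf₂ fun hγ hγ₀ => le_iInf₂ fun hγ₁ hγΩ => ?_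
  refine ENNReal.div_le_of_le_mul' ?_
  rw [← hγ₀, ← hγ₁]
  exact edist_comp_le_mul_eVariationOn zero_le_one hγ fun t ht => hψ _ (hγΩ ht)

theorem pathLengthInf_le_Mdir_mul_edist {Ω : Set ℂ} {lam z w : ℂ} (hz : z ∈ Ω) (hw : w ∈ Ω)
    (hzw : z ≠ w) (hdir : (conj lam * (z - w)).im = 0) :
    pathLengthInf Ω z w ≤ Mdir Ω lam * edist z w := by
  have hratio : pathLengthInf Ω z w / edist z w ≤ Mdir Ω lam := by
    rw [edist_dist, dist_eq_norm]
    exact le_iSup_of_le z <| le_iSup_of_le w <| le_iSup_of_le hz <| le_iSup_of_le hw <|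
      le_iSup_of_le hzw <| le_iSup_of_le hdir le_rfl
  exact (ENNReal.div_le_iff_le_mul (Or.inl (edist_pos.mpr hzw |>.ne'))
    (Or.inl (edist_ne_top z w))).mp hratio

theorem ENNReal.eq_zero_of_div_le_mul {a c K : ℝ≥0∞} (ha : a ≠ ⊤) (hc : c ≠ ⊤) (hK : K ≠ ⊤)
    (hcK : c * K < 1) (h : a / K ≤ c * a) : a = 0 := by
  by_contra ha₀
  have h' : a ≤ a * (c * K) := by
    rw [mul_left_comm, ← mul_assoc]
    exact (ENNReal.div_le_iff_le_mul (Or.inr (mul_ne_top hc ha)) (Or.inl hK)).mp h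
  exact (h'.trans_lt (ENNReal.mul_lt_mul_right ha₀ ha hcK)).ne (mul_one a).symm

theorem ENNReal.mul_ofReal_div_one_sub_lt_one {m : ℝ≥0∞} {ε : ℝ} (hm : m ≠ ⊤) (hε₀ : 0 ≤ ε)
    (hε : ε < 1 / (m.toReal + 1)) : m * ENNReal.ofReal (ε / (1 - ε)) < 1 := by
  have hεm : ε * (m.toReal + 1) < 1 := (lt_div_iff₀ (by positivity)).mp hε
  have hε₁ : ε < 1 := by nlinarith [ENNReal.toReal_nonneg (a := m)]
  rw [← ENNReal.ofReal_toReal hm, ← ENNReal.ofReal_mul ENNReal.toReal_nonneg,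
    ENNReal.ofReal_lt_one, ← mul_div_assoc, div_lt_one (by linarith)]
  linarith

theorem stmt_12_general (φ : ℂ → ℂ)
    (hφa : AnalyticOnNhd ℂ φ (ball 0 1)) (hφi : Set.InjOn φ (ball 0 1))
    (lam : ℂ) (hlam : ‖lam‖ = 1)
    (hM : Mdir (φ '' ball (0 : ℂ) 1) lam ≠ ⊤)
    (ε : ℝ) (hε0 : 0 ≤ ε)
    (hε : ε < 1 / (2 * (Mdir (φ '' ball (0 : ℂ) 1) lam).toReal + 1))
    (h g : ℂ → ℂ)
    (hha : AnalyticOnNhd ℂ h (ball 0 1)) (hga : AnalyticOnNhd ℂ g (ball 0 1))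
    (hshear : ∀ z ∈ ball (0 : ℂ) 1, h z - lam ^ 2 * g z = φ z)
    (hdil : ∀ z ∈ ball (0 : ℂ) 1,
      ‖deriv g z‖ ≤ ε * ‖deriv h z‖) :
    Set.InjOn (fun z => h z + conj (g z)) (ball (0 : ℂ) 1) := by
  set M := Mdir (φ '' ball (0 : ℂ) 1) lam
  have hε₁ : ε < 1 := hε.trans_le (div_le_one_of_le₀ (by simp) (by positivity))
  have hkM : 2 * M * ENNReal.ofReal (ε / (1 - ε)) < 1 :=
    ENNReal.mul_ofReal_div_one_sub_lt_one (mul_ne_top ofNat_ne_top hM) hε0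
      (by rwa [toReal_mul, toReal_ofNat])
  have hlip : ∀ y ∈ φ '' ball (0 : ℂ) 1, ∃ r > 0,
      LipschitzOnWith (ε / (1 - ε)).toNNReal (g ∘ invFunOn φ (ball 0 1)) (ball y r) :=
    fun y hy => exists_lipschitzOnWith_ball_comp_invFunOn isOpen_ball hφa hφi hga.differentiableOn
      (fun z hz => (norm_deriv_le_of_shear isOpen_ball hha.differentiableOn hga.differentiableOn
        hshear hlam hε0 hε₁ hdil hz).trans (by gcongr; exact Real.le_coe_toNNReal _)) hy
  intro z₁ hz₁ z₂ hz₂ hf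
  have hchord : φ z₁ - φ z₂ = conj (g z₂ - g z₁) + lam ^ 2 * (g z₂ - g z₁) := by
    rw [← hshear z₁ hz₁, ← hshear z₂ hz₂, map_sub]
    linear_combination hf
  refine hφi hz₁ hz₂ (by_contra fun hne => ?_)
  have hℓ := edist_div_le_pathLengthInf hlip (φ z₁) (φ z₂)
  simp only [comp_apply, hφi.leftInvOn_invFunOn hz₁, hφi.leftInvOn_invFunOn hz₂] at hℓ
  have hℓM := pathLengthInf_le_Mdir_mul_edist (lam := lam) (mem_image_of_mem φ hz₁)
    (mem_image_of_mem φ hz₂) hne (hchord ▸ im_conj_mul_conj_add_sq_mul hlam _)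
  have hφg : edist (φ z₁) (φ z₂) ≤ 2 * edist (g z₁) (g z₂) := by
    rw [edist_dist, edist_dist, dist_eq_norm, dist_eq_norm', hchord, ← ENNReal.ofReal_ofNat 2,
      ← ENNReal.ofReal_mul zero_le_two]
    exact ENNReal.ofReal_le_ofReal (norm_conj_add_sq_mul_le hlam _)
  have hg : edist (g z₁) (g z₂) = 0 := by
    refine ENNReal.eq_zero_of_div_le_mul (edist_ne_top _ _) (mul_ne_top ofNat_ne_top hM)
      ofReal_ne_top hkM ?_
    calc _ ≤ M * edist (φ z₁) (φ z₂) := hℓ.trans hℓM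
      _ ≤ M * (2 * edist (g z₁) (g z₂)) := by gcongr
      _ = 2 * M * edist (g z₁) (g z₂) := by ring
  apply hne
  rw [← sub_eq_zero, hchord, edist_eq_zero.mp hg, sub_self, map_zero, mul_zero, add_zero]

theorem stmt_12 (φ : ℂ → ℂ)
    (hφa : AnalyticOnNhd ℂ φ (ball 0 1)) (hφi : Set.InjOn φ (ball 0 1))
    (hΩ : φ '' ball (0 : ℂ) 1 ≠ Set.univ)
    (lam : ℂ) (hlam : ‖lam‖ = 1)
    (hM : Mdir (φ '' ball (0 : ℂ) 1) lam ≠ ⊤)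
    (ε : ℝ) (hε0 : 0 ≤ ε)
    (hε : ε < 1 / (2 * (Mdir (φ '' ball (0 : ℂ) 1) lam).toReal + 1))
    (h g : ℂ → ℂ)
    (hha : AnalyticOnNhd ℂ h (ball 0 1)) (hga : AnalyticOnNhd ℂ g (ball 0 1))
    (hshear : ∀ z ∈ ball (0 : ℂ) 1, h z - lam ^ 2 * g z = φ z)
    (hdil : ∀ z ∈ ball (0 : ℂ) 1,
      ‖deriv g z‖ ≤ ε * ‖deriv h z‖) :
    Set.InjOn (fun z => h z + conj (g z)) (ball (0 : ℂ) 1) :=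
  stmt_12_general φ hφa hφi lam hlam hM ε hε0 hε h g hha hga hshear hdil
end
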